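/- arXiv:2101.10262 — 3 statements merged into one kernel-verified Lean document; each statement's English description precedes it below -/
import Mathlib

section
/- Let $A$ be a commutative ring, $I \subseteq A$ an ideal, and $F \colon \mathbb{N} \to \mathrm{Ideal}(A)$ a decreasing sequence of ideals (i.e. $F(n+1) \subseteq F(n)$ for all $n$) with $F(n) \subseteq I^n$ for all $n$. Assume that for every $n$: (i) $F(n) + I^{n+1} = I^n$ (that is, the induced map of graded pieces $F(n)/F(n+1) \to I^n/I^{n+1}$ is surjective), and (ii) $F(n)$ is closed in the $I$-adic topology, i.e. $\bigcap_{k \in \mathbb{N}} (F(n) + I^k) \subseteq F(n)$. Then $F(n) = I^n$ for every $n$. -/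
/-!
Surjectivity on graded pieces lets one trade `Iᵏ` for `Iᵏ⁺¹` modulo `F n` whenever `k ≥ n`,
since `F k ⊆ F n`; hence `F n + Iᵏ = Iⁿ` for every `k ≥ n`. So `Iⁿ` lies in every `I`-adic
neighbourhood `F n + Iᵏ` of `F n`, and closedness of `F n` gives `Iⁿ ⊆ F n`.
-/

section SemilatticeSup

variable {α : Type*} [SemilatticeSup α] {F J : ℕ → α}

theorem sup_eq_of_sup_succ_eq (hF : Antitone F) (hgr : ∀ k, F k ⊔ J (k + 1) = J k)
    {n k : ℕ} (hnk : n ≤ k) : F n ⊔ J k = J n := by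
  induction k, hnk using Nat.le_induction with
  | base => exact sup_eq_right.mpr (hgr n ▸ le_sup_left)
  | succ k hnk ih =>
    calc F n ⊔ J (k + 1) = F n ⊔ (F k ⊔ J (k + 1)) := by
          rw [← sup_assoc, sup_eq_left.mpr (hF hnk)]
      _ = J n := by rw [hgr k, ih]

theorem le_sup_of_sup_succ_eq (hF : Antitone F) (hJ : Antitone J)
    (hgr : ∀ k, F k ⊔ J (k + 1) = J k) (n k : ℕ) : J n ≤ F n ⊔ J k := by
  rcases le_total n k with hnk | hkn
  · exact (sup_eq_of_sup_succ_eq hF hgr hnk).ge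
  · exact le_sup_of_le_right (hJ hkn)

end SemilatticeSup

theorem filtration_eq_adic_of_gr_surjective_of_closed_general
    {A : Type*} [CommRing A] (I : Ideal A)
    (F : ℕ → Ideal A)
    (hdec : ∀ n, F (n + 1) ≤ F n)
    (hgr_surj : ∀ n, F n ⊔ I ^ (n + 1) = I ^ n)
    (hclosed : ∀ n, (⨅ k : ℕ, F n ⊔ I ^ k) ≤ F n) :
    ∀ n, F n = I ^ n := by
  intro n
  have hI : Antitone (I ^ · : ℕ → Ideal A) := fun _ _ h => Ideal.pow_le_pow_right h
  refine le_antisymm (hgr_surj n ▸ le_sup_left) ((le_iInf fun k => ?_).trans (hclosed n))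
  exact le_sup_of_sup_succ_eq (antitone_nat_of_succ_le hdec) hI hgr_surj n k

/-- **Key step of the unicity theorem for complete filtrations**
(key step of Theorem 1.2 = Proposition 4.9 of the paper).

If `F : ℕ → Ideal A` is a decreasing sequence of ideals with `F n ⊆ Iⁿ`, surjective on
associated graded pieces (`F n + Iⁿ⁺¹ = Iⁿ`), and each `F n` is closed in the `I`-adic
topology, then `F n = Iⁿ` for all `n`. -/
theorem filtration_eq_adic_of_gr_surjective_of_closed
    {A : Type*} [CommRing A] (I : Ideal A)
    (F : ℕ → Ideal A)
    (hdec : ∀ n, F (n + 1) ≤ F n)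
    (hle : ∀ n, F n ≤ I ^ n)
    (hgr_surj : ∀ n, F n ⊔ I ^ (n + 1) = I ^ n)
    (hclosed : ∀ n, (⨅ k : ℕ, F n ⊔ I ^ k) ≤ F n) :
    ∀ n, F n = I ^ n :=
  filtration_eq_adic_of_gr_surjective_of_closed_general I F hdec hgr_surj hclosed
end

section
/- Let $A$ be a commutative ring and $I \subseteq A$ an ideal such that $A$ is $I$-adically complete and separated. Suppose $F, F' \colon \mathbb{N} \to \mathrm{Ideal}(A)$ are two filtrations, each satisfying: $F(0)=A$; decreasing ($F(n+1) \subseteq F(n)$); multiplicative ($F(m)\cdot F(n) \subseteq F(m+n)$); $F(n) \subseteq I^n$ for all $n$; $F(n) + I^{n+1} = I^n$ and $F(n) \cap I^{n+1} \subseteq F(n+1)$ for all $n$; and $\bigcap_{k} (F(n) + I^k) \subseteq F(n)$ for all $n$ (and likewise for $F'$). Then $F = F'$. In other words, there is at most one such multiplicative complete filtration on $A$ with the specified associated graded, namely the $I$-adic filtration. -/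
/-! Each `F n` is the `I`-adic filtration. Since `F n` is an ideal, `I ^ n = F n ⊔ I ^ (n + 1)`
propagates to `I ^ n ≤ F n ⊔ I ^ (n + k)` for every `k` (multiply by `I ^ k`), so `I ^ n` lies in
the `I`-adic closure `⨅ k, F n ⊔ I ^ k`, which is `F n` by hypothesis. -/

namespace Ideal

variable {A : Type*} [CommRing A] {I J : Ideal A} {n : ℕ}

theorem pow_le_sup_pow_add (h : I ^ n ≤ J ⊔ I ^ (n + 1)) (k : ℕ) :
    I ^ n ≤ J ⊔ I ^ (n + k) := by
  induction k with
  | zero => exact le_sup_right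
  | succ k ih =>
    have hstep : I ^ (n + k) ≤ J ⊔ I ^ (n + (k + 1)) :=
      calc I ^ (n + k) = I ^ k * I ^ n := by rw [pow_add, mul_comm]
        _ ≤ I ^ k * (J ⊔ I ^ (n + 1)) := mul_mono_right h
        _ = I ^ k * J ⊔ I ^ (n + (k + 1)) := by rw [mul_sup, ← pow_add, Nat.add_left_comm]
        _ ≤ J ⊔ I ^ (n + (k + 1)) := sup_le_sup_right mul_le_right _
    exact ih.trans (sup_le le_sup_left hstep)

theorem pow_le_of_le_sup_pow_succ (h : I ^ n ≤ J ⊔ I ^ (n + 1))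
    (hJ : ⨅ k, J ⊔ I ^ k ≤ J) : I ^ n ≤ J :=
  (le_iInf fun k => (pow_le_sup_pow_add h k).trans
    (sup_le_sup_left (pow_le_pow_right (Nat.le_add_left k n)) J)).trans hJ

theorem eq_pow_of_sup_pow_succ_eq (hle : J ≤ I ^ n) (hsup : J ⊔ I ^ (n + 1) = I ^ n)
    (hJ : ⨅ k, J ⊔ I ^ k ≤ J) : J = I ^ n :=
  le_antisymm hle (pow_le_of_le_sup_pow_succ hsup.ge hJ)

end Ideal

theorem unique_complete_multiplicative_filtration_general
    {A : Type*} [CommRing A] (I : Ideal A)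
    (F F' : ℕ → Ideal A)
    (hle : ∀ n, F n ≤ I ^ n)
    (hgr_surj : ∀ n, F n ⊔ I ^ (n + 1) = I ^ n)
    (hclosed : ∀ n, (⨅ k : ℕ, F n ⊔ I ^ k) ≤ F n)
    (hle' : ∀ n, F' n ≤ I ^ n)
    (hgr_surj' : ∀ n, F' n ⊔ I ^ (n + 1) = I ^ n)
    (hclosed' : ∀ n, (⨅ k : ℕ, F' n ⊔ I ^ k) ≤ F' n) :
    F = F' := by
  funext n
  rw [Ideal.eq_pow_of_sup_pow_succ_eq (hle n) (hgr_surj n) (hclosed n),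
    Ideal.eq_pow_of_sup_pow_succ_eq (hle' n) (hgr_surj' n) (hclosed' n)]

/-- **Uniqueness of the multiplicative complete filtration with specified associated graded**
(the uniqueness statement drawn from Theorem 1.2 of the paper: on an `I`-adically complete
augmented algebra there is at most one multiplicative filtration satisfying the conditions
of that theorem, namely the `I`-adic filtration). -/
theorem unique_complete_multiplicative_filtration
    {A : Type*} [CommRing A] (I : Ideal A) [IsAdicComplete I A]
    (F F' : ℕ → Ideal A)
    (hF0 : F 0 = ⊤)
    (hdec : ∀ n, F (n + 1) ≤ F n)
    (hmul : ∀ m n, F m * F n ≤ F (m + n))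
    (hle : ∀ n, F n ≤ I ^ n)
    (hgr_surj : ∀ n, F n ⊔ I ^ (n + 1) = I ^ n)
    (hgr_inj : ∀ n, F n ⊓ I ^ (n + 1) ≤ F (n + 1))
    (hclosed : ∀ n, (⨅ k : ℕ, F n ⊔ I ^ k) ≤ F n)
    (hF0' : F' 0 = ⊤)
    (hdec' : ∀ n, F' (n + 1) ≤ F' n)
    (hmul' : ∀ m n, F' m * F' n ≤ F' (m + n))
    (hle' : ∀ n, F' n ≤ I ^ n)
    (hgr_surj' : ∀ n, F' n ⊔ I ^ (n + 1) = I ^ n)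
    (hgr_inj' : ∀ n, F' n ⊓ I ^ (n + 1) ≤ F' (n + 1))
    (hclosed' : ∀ n, (⨅ k : ℕ, F' n ⊔ I ^ k) ≤ F' n) :
    F = F' :=
  unique_complete_multiplicative_filtration_general I F F' hle hgr_surj hclosed hle' hgr_surj'
    hclosed'
end

section
/- Let $R$ be a commutative ring, $M$ an $R$-module, and $F \colon \mathbb{N} \to \mathrm{Submodule}\,R\,M$ a decreasing sequence of submodules ($F(n+1) \subseteq F(n)$ for all $n$). Let $N = \bigoplus_{n \in \mathbb{N}} F(n)$ be the associated Rees module and let $\varphi \colon N \to N$ be the $R$-linear map ('multiplication by $t$') which sends the degree-$(n+1)$ component into the degree-$n$ component via the inclusion $F(n+1) \subseteq F(n)$. Then the inverse limit of the tower $\cdots \xrightarrow{\varphi} N \xrightarrow{\varphi} N$ vanishes — that is, the only sequence $x \colon \mathbb{N} \to N$ satisfying $\varphi(x_{k+1}) = x_k$ for all $k$ is the zero sequence — if and only if $\bigcap_{n \in \mathbb{N}} F(n) = 0$. -/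
open DirectSum

/-!
Reading off components, `t` acts on the Rees module as the shift `(t y)ₙ = yₙ₊₁`. Hence an
element `xₖ` of a compatible sequence satisfies `(xₖ)ₙ = (xₖ₊ⱼ)ₙ₊ⱼ ∈ F (n + j) ⊆ F j` for
every `j`, so all its components lie in `⋂ F`. Conversely an element `m ∈ ⋂ F` gives the compatible
sequence `k ↦ m` placed in degree `k`.
-/

namespace Rees

variable {R M : Type*} [CommRing R] [AddCommGroup M] [Module R M]
  {F : ℕ → Submodule R M}
  {φ : (⨁ n : ℕ, F n) →ₗ[R] ⨁ n : ℕ, F n}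

theorem coe_apply_eq_apply_succ (hdec : ∀ n, F (n + 1) ≤ F n)
    (hφ0 : ∀ x : F 0, φ (lof R ℕ (fun n => F n) 0 x) = 0)
    (hφ : ∀ (n : ℕ) (x : F (n + 1)),
      φ (lof R ℕ (fun n => F n) (n + 1) x) =
        lof R ℕ (fun n => F n) n ⟨(x : M), hdec n x.2⟩)
    (y : ⨁ n : ℕ, F n) (n : ℕ) : (φ y n : M) = y (n + 1) := by
  suffices (F n).subtype ∘ₗ component R ℕ (fun n => F n) n ∘ₗ φ =
      (F (n + 1)).subtype ∘ₗ component R ℕ (fun n => F n) (n + 1) from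
    congrArg (· y) this
  refine linearMap_ext R fun i => LinearMap.ext fun b => ?_
  cases i with
  | zero =>
    simp only [LinearMap.comp_apply, hφ0, map_zero, component.of, dif_neg n.succ_ne_zero.symm]
  | succ i =>
    simp only [LinearMap.comp_apply, hφ]
    obtain rfl | hne := eq_or_ne i n
    · simp only [component.lof_self, Submodule.subtype_apply]
    · simp only [component.of, dif_neg hne, dif_neg (by omega : i + 1 ≠ n + 1), map_zero]

theorem coe_apply_eq_of_tower (hshift : ∀ y n, (φ y n : M) = y (n + 1))
    (x : ℕ → ⨁ n : ℕ, F n) (hx : ∀ k, φ (x (k + 1)) = x k) (j k n : ℕ) :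
    (x k n : M) = x (k + j) (n + j) := by
  induction j generalizing n with
  | zero => rfl
  | succ j ih => rw [ih, ← hx (k + j), hshift]; rfl

theorem coe_apply_mem_iInf_of_tower (hF : Antitone F) (hshift : ∀ y n, (φ y n : M) = y (n + 1))
    (x : ℕ → ⨁ n : ℕ, F n) (hx : ∀ k, φ (x (k + 1)) = x k) (k n : ℕ) :
    (x k n : M) ∈ ⨅ i, F i :=
  Submodule.mem_iInf _ |>.mpr fun j => by
    rw [coe_apply_eq_of_tower hshift x hx j]
    exact hF (Nat.le_add_left j n) (x (k + j) (n + j)).2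

theorem eq_zero_of_tower (hF : Antitone F) (hsep : (⨅ n : ℕ, F n) = ⊥)
    (hshift : ∀ y n, (φ y n : M) = y (n + 1))
    (x : ℕ → ⨁ n : ℕ, F n) (hx : ∀ k, φ (x (k + 1)) = x k) (k : ℕ) : x k = 0 := by
  ext n
  simpa [hsep] using coe_apply_mem_iInf_of_tower hF hshift x hx k n

end Rees

/-- **`t`-completeness of the Rees module is equivalent to separatedness of the filtration**
(the classical, 1-categorical content of Proposition 4.8 of the paper).

Let `F : ℕ → Submodule R M` be a decreasing filtration, let `N = ⨁ₙ F n` be its Rees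
module, and let `φ : N → N` be "multiplication by `t`", the `R`-linear map sending the
degree-`(n+1)` component into the degree-`n` component via the inclusion
`F (n+1) ⊆ F n` (and killing the degree-`0` component).  Then the inverse limit of the
tower `⋯ →φ N →φ N` vanishes — i.e. the only sequence `x : ℕ → N` with
`φ (x (k+1)) = x k` for all `k` is the zero sequence — if and only if `⋂ₙ F n = 0`. -/
theorem rees_module_t_complete_iff_separated
    {R M : Type*} [CommRing R] [AddCommGroup M] [Module R M]
    (F : ℕ → Submodule R M) (hdec : ∀ n, F (n + 1) ≤ F n)
    (φ : (⨁ n : ℕ, F n) →ₗ[R] ⨁ n : ℕ, F n)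
    (hφ0 : ∀ x : F 0, φ (DirectSum.lof R ℕ (fun n => F n) 0 x) = 0)
    (hφ : ∀ (n : ℕ) (x : F (n + 1)),
      φ (DirectSum.lof R ℕ (fun n => F n) (n + 1) x) =
        DirectSum.lof R ℕ (fun n => F n) n ⟨(x : M), hdec n x.2⟩) :
    (∀ x : ℕ → ⨁ n : ℕ, F n, (∀ k, φ (x (k + 1)) = x k) → ∀ k, x k = 0) ↔
      (⨅ n : ℕ, F n) = ⊥ := by
  have hshift := Rees.coe_apply_eq_apply_succ hdec hφ0 hφ
  refine ⟨fun hcomplete => ?_, fun hsep =>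
    Rees.eq_zero_of_tower (antitone_nat_of_succ_le hdec) hsep hshift⟩
  refine (Submodule.eq_bot_iff _).mpr fun m hm => ?_
  have hmF : ∀ n, m ∈ F n := Submodule.mem_iInf _ |>.mp hm
  have hconst := hcomplete (fun k => lof R ℕ (fun n => F n) k ⟨m, hmF k⟩) (fun k => hφ k _) 0
  simpa using congrArg (fun z => (z 0 : M)) hconst
end
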